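/- arXiv:2106.01214 — 2 statements merged into one kernel-verified Lean document; each statement's English description precedes it below -/
import Mathlib

section
/- Under the tail condition that g(y)·(log f)'(y) → 0 as y → ±∞ and integrability of all terms, the integration-by-parts identity holds: ∫ (log g)'(y)(log f)'(y) g(y) dy = −∫ (log f)''(y) g(y) dy; consequently D_F(g‖f) = (1/2)∫ H(y; f) g(y) dy + (1/2)∫ ((log g)'(y))² g(y) dy where H(y; f) = 2(log f)''(y) + ((log f)'(y))². -/
/-!
Since `(log g)' g = g'`, the cross term `∫ (log g)' (log f)' g` is `∫ g' (log f)'`, which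
integrates by parts to `-∫ g (log f)''` once the boundary term `g (log f)'` vanishes at `±∞`.
Expanding the square in `D_F(g‖f)` and substituting this identity turns `-2 ∫ (log g)' (log f)' g`
into `2 ∫ (log f)'' g`, which together with `∫ ((log f)')² g` is the expected Hyvärinen score.
-/

open Real MeasureTheory Filter

noncomputable def hyv (f : ℝ → ℝ) (y : ℝ) : ℝ :=
  2 * deriv (deriv fun x => Real.log (f x)) y + (deriv (fun x => Real.log (f x)) y) ^ 2

noncomputable def fisherDiv (g f : ℝ → ℝ) : ℝ :=
  (1/2) * ∫ y : ℝ,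
    (deriv (fun x => Real.log (g x)) y - deriv (fun x => Real.log (f x)) y)^2 * g y

theorem integral_deriv_log_mul_mul_eq_neg_integral_deriv_mul {g φ : ℝ → ℝ}
    (hg : ∀ y, g y ≠ 0) (hgd : Differentiable ℝ g) (hφ : Differentiable ℝ φ)
    (htop : Tendsto (fun y => g y * φ y) atTop (nhds 0))
    (hbot : Tendsto (fun y => g y * φ y) atBot (nhds 0))
    (hcross : Integrable fun y => deriv (fun x => log (g x)) y * φ y * g y)
    (hsecond : Integrable fun y => deriv φ y * g y) :
    ∫ y, deriv (fun x => log (g x)) y * φ y * g y = -∫ y, deriv φ y * g y := by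
  have hlog : ∀ y, deriv (fun x => log (g x)) y * φ y * g y = deriv g y * φ y := fun y => by
    rw [deriv.log (hgd y) (hg y)]
    field_simp [hg y]
  simp_rw [hlog] at hcross ⊢
  have hparts := integral_mul_deriv_eq_deriv_mul (fun y _ => (hgd y).hasDerivAt)
    (fun y _ => (hφ y).hasDerivAt)
    (by simpa only [mul_comm] using hsecond : Integrable fun y => g y * deriv φ y) hcross hbot htop
  simp only [mul_comm (g _), sub_self, zero_sub] at hparts
  linarith

theorem integral_sub_sq_mul {a b w : ℝ → ℝ} (hab : Integrable fun y => a y * b y * w y)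
    (ha : Integrable fun y => a y ^ 2 * w y) (hb : Integrable fun y => b y ^ 2 * w y) :
    ∫ y, (a y - b y) ^ 2 * w y
      = (∫ y, a y ^ 2 * w y) + (∫ y, b y ^ 2 * w y) - 2 * ∫ y, a y * b y * w y := by
  have hexpand : (fun y => (a y - b y) ^ 2 * w y)
      = fun y => a y ^ 2 * w y + b y ^ 2 * w y - 2 * (a y * b y * w y) :=
    funext fun y => by ring
  have hsum : Integrable fun y => a y ^ 2 * w y + b y ^ 2 * w y := ha.add hb
  rw [hexpand, integral_sub hsum (hab.const_mul 2), integral_add ha hb,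
    integral_const_mul]

theorem integral_hyv_mul {f w : ℝ → ℝ}
    (hsecond : Integrable fun y => deriv (deriv fun x => log (f x)) y * w y)
    (hsq : Integrable fun y => deriv (fun x => log (f x)) y ^ 2 * w y) :
    ∫ y, hyv f y * w y = 2 * (∫ y, deriv (deriv fun x => log (f x)) y * w y)
      + ∫ y, deriv (fun x => log (f x)) y ^ 2 * w y := by
  have hexpand : (fun y => hyv f y * w y) = fun y =>
      2 * (deriv (deriv fun x => log (f x)) y * w y) + deriv (fun x => log (f x)) y ^ 2 * w y :=
    funext fun y => by simp only [hyv]; ring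
  rw [hexpand, integral_add (hsecond.const_mul 2) hsq, integral_const_mul]

theorem stmt9_general (g f : ℝ → ℝ) (hg : ∀ y, 0 < g y) (hf : ∀ y, 0 < f y)
    (hg1 : ContDiff ℝ 1 g) (hf2 : ContDiff ℝ 2 f)
    (htailTop : Tendsto (fun y => g y * deriv (fun x => Real.log (f x)) y) atTop (nhds 0))
    (htailBot : Tendsto (fun y => g y * deriv (fun x => Real.log (f x)) y) atBot (nhds 0))
    (h1 : Integrable fun y : ℝ =>
      deriv (fun x => Real.log (g x)) y * deriv (fun x => Real.log (f x)) y * g y)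
    (h2 : Integrable fun y : ℝ => deriv (deriv fun x => Real.log (f x)) y * g y)
    (h3 : Integrable fun y : ℝ => (deriv (fun x => Real.log (g x)) y)^2 * g y)
    (h4 : Integrable fun y : ℝ => (deriv (fun x => Real.log (f x)) y)^2 * g y) :
    (∫ y : ℝ, deriv (fun x => Real.log (g x)) y * deriv (fun x => Real.log (f x)) y * g y
      = -∫ y : ℝ, deriv (deriv fun x => Real.log (f x)) y * g y) ∧
    fisherDiv g f = (1/2) * (∫ y : ℝ, hyv f y * g y)
      + (1/2) * ∫ y : ℝ, (deriv (fun x => Real.log (g x)) y)^2 * g y := by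
  have hlogf : ContDiff ℝ (1 + 1) fun x => log (f x) := hf2.log fun x => (hf x).ne'
  have hscore : Differentiable ℝ (deriv fun x => log (f x)) :=
    hlogf.deriv'.differentiable one_ne_zero
  have hcross := integral_deriv_log_mul_mul_eq_neg_integral_deriv_mul (fun y => (hg y).ne')
    (hg1.differentiable one_ne_zero) hscore htailTop htailBot h1 h2
  refine ⟨hcross, ?_⟩
  rw [fisherDiv, integral_sub_sq_mul h1 h3 h4, integral_hyv_mul h2 h4, hcross]
  ring

/-- Integration by parts for Fisher's divergence: under a tail condition the cross
term equals minus the expected second log-derivative of `f`, and consequently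
`D_F(g‖f)` equals half the expected Hyvärinen score plus a term not depending on `f`. -/
theorem stmt9 (g f : ℝ → ℝ) (hg : ∀ y, 0 < g y) (hf : ∀ y, 0 < f y)
    (hg1 : ContDiff ℝ 1 g) (hf2 : ContDiff ℝ 2 f)
    (hgInt : Integrable g) (hgone : ∫ y : ℝ, g y = 1)
    (htailTop : Tendsto (fun y => g y * deriv (fun x => Real.log (f x)) y) atTop (nhds 0))
    (htailBot : Tendsto (fun y => g y * deriv (fun x => Real.log (f x)) y) atBot (nhds 0))
    (h1 : Integrable fun y : ℝ =>
      deriv (fun x => Real.log (g x)) y * deriv (fun x => Real.log (f x)) y * g y)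
    (h2 : Integrable fun y : ℝ => deriv (deriv fun x => Real.log (f x)) y * g y)
    (h3 : Integrable fun y : ℝ => (deriv (fun x => Real.log (g x)) y)^2 * g y)
    (h4 : Integrable fun y : ℝ => (deriv (fun x => Real.log (f x)) y)^2 * g y) :
    (∫ y : ℝ, deriv (fun x => Real.log (g x)) y * deriv (fun x => Real.log (f x)) y * g y
      = -∫ y : ℝ, deriv (deriv fun x => Real.log (f x)) y * g y) ∧
    fisherDiv g f = (1/2) * (∫ y : ℝ, hyv f y * g y)
      + (1/2) * ∫ y : ℝ, (deriv (fun x => Real.log (g x)) y)^2 * g y :=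
  stmt9_general g f hg hf hg1 hf2 htailTop htailBot h1 h2 h3 h4
end

section
/- For the Gaussian density f(y) = N(y; μ, σ²), the expected Hyvärinen score under a data-generating density g with finite second moment equals E_g[H(y; f)] = −2/σ² + E_g[(y−μ)²]/σ⁴, and over all (μ, σ²) this is minimized at μ* = E_g[y] and σ²* = Var_g(y), with minimal value −1/Var_g(y). -/
open Real MeasureTheory

/-- Gaussian density with mean `μ` and variance `v`. -/
noncomputable def gaussPdf (μ v y : ℝ) : ℝ :=
  (Real.sqrt (2 * Real.pi * v))⁻¹ * Real.exp (-(y - μ)^2 / (2 * v))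

/-!
For the Gaussian model, `log f` is a quadratic with leading coefficient `-1/(2v)`, so the
Hyvärinen score is `-2/v + (y - μ)²/v²` pointwise and its expectation is
`-2/v + (V + (m - μ)²)/v²` by the bias–variance decomposition. The identity
`-2/v + V/v² + 1/V = V (1/V - 1/v)²` then shows that this is at least `-1/V`, with equality
at `μ = m`, `v = V`.
-/

section Gaussian

variable {μ v : ℝ}

lemma log_gaussPdf (hv : 0 < v) :
    (fun x => log (gaussPdf μ v x))
      = fun x => -log (sqrt (2 * π * v)) - (x - μ) ^ 2 / (2 * v) := by
  funext x
  have hsqrt : 0 < sqrt (2 * π * v) := sqrt_pos.2 (by positivity)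
  rw [gaussPdf, log_mul (inv_pos.2 hsqrt).ne' (exp_ne_zero _), log_inv, log_exp]
  ring

lemma deriv_log_gaussPdf (hv : 0 < v) :
    deriv (fun x => log (gaussPdf μ v x)) = fun y => -(y - μ) / v := by
  funext y
  rw [log_gaussPdf hv]
  have hsq : HasDerivAt (fun x : ℝ => (x - μ) ^ 2) (2 * (y - μ)) y := by
    simpa using ((hasDerivAt_id' y).sub_const μ).fun_pow 2
  rw [((hasDerivAt_const y _).fun_sub (hsq.div_const (2 * v))).deriv]
  field_simp
  ring

lemma deriv_deriv_log_gaussPdf (hv : 0 < v) (y : ℝ) :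
    deriv (deriv fun x => log (gaussPdf μ v x)) y = -1 / v := by
  rw [deriv_log_gaussPdf hv]
  simp

lemma hyv_gaussPdf (hv : 0 < v) (y : ℝ) :
    hyv (gaussPdf μ v) y = -2 / v + (y - μ) ^ 2 / v ^ 2 := by
  rw [hyv, deriv_deriv_log_gaussPdf hv, deriv_log_gaussPdf hv]
  field_simp

lemma integral_hyv_gaussPdf_mul {ρ : Measure ℝ} {g : ℝ → ℝ} (hg : Integrable g ρ)
    (hg_one : ∫ y, g y ∂ρ = 1) (hg_sq : Integrable (fun y => (y - μ) ^ 2 * g y) ρ)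
    (hv : 0 < v) :
    ∫ y, hyv (gaussPdf μ v) y * g y ∂ρ = -2 / v + (∫ y, (y - μ) ^ 2 * g y ∂ρ) / v ^ 2 := by
  have hpoint : ∀ y, hyv (gaussPdf μ v) y * g y
      = -2 / v * g y + (v ^ 2)⁻¹ * ((y - μ) ^ 2 * g y) := fun y => by
    rw [hyv_gaussPdf hv]
    ring
  simp_rw [hpoint]
  rw [integral_add (hg.const_mul _) (hg_sq.const_mul _), integral_const_mul,
    integral_const_mul, hg_one]
  ring

end Gaussian

lemma integral_sub_sq_mul_eq {ρ : Measure ℝ} {g : ℝ → ℝ} {m : ℝ} (hg : Integrable g ρ)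
    (hg_one : ∫ y, g y ∂ρ = 1) (hyg : Integrable (fun y => y * g y) ρ)
    (hm : ∫ y, y * g y ∂ρ = m) (hg_sq : Integrable (fun y => (y - m) ^ 2 * g y) ρ) (a : ℝ) :
    ∫ y, (y - a) ^ 2 * g y ∂ρ = ∫ y, (y - m) ^ 2 * g y ∂ρ + (m - a) ^ 2 := by
  have hpoint : ∀ y, (y - a) ^ 2 * g y
      = (y - m) ^ 2 * g y + (2 * (m - a) * (y * g y) + ((m - a) ^ 2 - 2 * (m - a) * m) * g y) :=
    fun y => by ring
  simp_rw [hpoint]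
  rw [integral_add hg_sq ((hyg.const_mul _).fun_add (hg.const_mul _)),
    integral_add (hyg.const_mul _) (hg.const_mul _), integral_const_mul, integral_const_mul,
    hg_one, hm]
  ring

lemma neg_one_div_le_neg_two_div_add_div_sq {V W : ℝ} (hV : 0 < V) (hVW : V ≤ W) (v : ℝ) :
    -1 / V ≤ -2 / v + W / v ^ 2 := by
  have hsq : -2 / v + V / v ^ 2 = V * (V⁻¹ - v⁻¹) ^ 2 - V⁻¹ := by
    simp only [div_eq_mul_inv]
    linear_combination (2 * v⁻¹ - V⁻¹) * mul_inv_cancel₀ hV.ne'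
  calc -1 / V = 0 - V⁻¹ := by ring
    _ ≤ V * (V⁻¹ - v⁻¹) ^ 2 - V⁻¹ := by gcongr; positivity
    _ = -2 / v + V / v ^ 2 := hsq.symm
    _ ≤ -2 / v + W / v ^ 2 := by gcongr

theorem stmt19_general (g : ℝ → ℝ) (hgInt : Integrable g)
    (hgone : ∫ y : ℝ, g y = 1)
    (hInt1 : Integrable fun y : ℝ => y * g y)
    (hInt2 : ∀ μ : ℝ, Integrable fun y : ℝ => (y - μ)^2 * g y)
    (m V : ℝ) (hm : m = ∫ y : ℝ, y * g y) (hV : V = ∫ y : ℝ, (y - m)^2 * g y)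
    (hVpos : 0 < V) :
    (∀ μ v : ℝ, 0 < v →
      ∫ y : ℝ, hyv (gaussPdf μ v) y * g y
        = -2 / v + (∫ y : ℝ, (y - μ)^2 * g y) / v^2) ∧
    (∀ μ v : ℝ, 0 < v →
      -1 / V ≤ -2 / v + (∫ y : ℝ, (y - μ)^2 * g y) / v^2) ∧
    (∫ y : ℝ, hyv (gaussPdf m V) y * g y = -1 / V) := by
  have hscore : ∀ μ v : ℝ, 0 < v → ∫ y, hyv (gaussPdf μ v) y * g y
      = -2 / v + (∫ y, (y - μ) ^ 2 * g y) / v ^ 2 :=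
    fun μ v hv => integral_hyv_gaussPdf_mul hgInt hgone (hInt2 μ) hv
  refine ⟨hscore, fun μ v _ => ?_, ?_⟩
  · rw [integral_sub_sq_mul_eq hgInt hgone hInt1 hm.symm (hInt2 m), ← hV]
    exact neg_one_div_le_neg_two_div_add_div_sq hVpos (le_add_of_nonneg_right (sq_nonneg _)) v
  · rw [hscore m V hVpos, ← hV]
    field_simp
    ring

/-- The expected Hyvärinen score of the Gaussian model under `g` equals
`−2/σ² + E_g[(y−μ)²]/σ⁴`, is minimized at `μ* = E_g[y]`, `σ²* = Var_g(y)`, with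
minimal value `−1/Var_g(y)`. -/
theorem stmt19 (g : ℝ → ℝ) (hg : ∀ y, 0 ≤ g y) (hgInt : Integrable g)
    (hgone : ∫ y : ℝ, g y = 1)
    (hInt1 : Integrable fun y : ℝ => y * g y)
    (hInt2 : ∀ μ : ℝ, Integrable fun y : ℝ => (y - μ)^2 * g y)
    (m V : ℝ) (hm : m = ∫ y : ℝ, y * g y) (hV : V = ∫ y : ℝ, (y - m)^2 * g y)
    (hVpos : 0 < V) :
    (∀ μ v : ℝ, 0 < v →
      ∫ y : ℝ, hyv (gaussPdf μ v) y * g y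
        = -2 / v + (∫ y : ℝ, (y - μ)^2 * g y) / v^2) ∧
    (∀ μ v : ℝ, 0 < v →
      -1 / V ≤ -2 / v + (∫ y : ℝ, (y - μ)^2 * g y) / v^2) ∧
    (∫ y : ℝ, hyv (gaussPdf m V) y * g y = -1 / V) :=
  stmt19_general g hgInt hgone hInt1 hInt2 m V hm hV hVpos
end
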